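/- arXiv:2005.05210 — 2 statements merged into one kernel-verified Lean document; each statement's English description precedes it below -/
import Mathlib

section
/- (Gaussian scale-mixture / group lasso equivalence, normalization constant form) Let p ≥ 1 and λ > 0. If γ² ~ Gamma((p+1)/2, λ²/2) (shape-rate parameterization) and W | γ² ~ N(0, γ² I_p) on ℝ^p, then the marginal density of W satisfies p(W) ∝ exp(−λ‖W‖₂), i.e., W has a multivariate Laplace distribution with density C_{p,λ} exp(−λ‖W‖₂) for some normalizing constant C_{p,λ} > 0. -/
/-!
The powers of `s` in the Gaussian and Gamma densities combine to `s^(-1/2)`, and the substitution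
`s = t²` turns the mixture integral into `∫₀^∞ exp (-(β²t² + α²/t²)) dt` with `α = ‖W‖/√2`,
`β = λ/√2`. Completing the square, this is `exp (-2αβ) ∫₀^∞ exp (-(βt - α/t)²) dt`, and the last
integral is `√π / (2β)` for every `α > 0` (Cauchy–Schlömilch): `u = βt - α/t` maps `(0, ∞)` onto
`ℝ` with `du = (β + α/t²) dt`, and the involution `t ↦ α/(βt)` shows that the two summands of
`β + α/t²` contribute equally. Since `2αβ = λ‖W‖`, the mixture is a constant times `exp (-λ‖W‖)`.
-/

open MeasureTheory Real Set

section CauchySchlomilch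

variable {E : Type*} [NormedAddCommGroup E] [NormedSpace ℝ E] {α β : ℝ}

lemma hasDerivAt_mul_sub_div {t : ℝ} (ht : t ≠ 0) :
    HasDerivAt (fun t => β * t - α / t) (β + α / t ^ 2) t := by
  have h : HasDerivAt (fun t => β * t - α * t⁻¹) (β * 1 - α * -(t ^ 2)⁻¹) t :=
    ((hasDerivAt_id t).const_mul β).sub ((hasDerivAt_inv ht).const_mul α)
  convert h using 1
  · ext t
    ring
  · ring

lemma strictMonoOn_mul_sub_div (hα : 0 ≤ α) (hβ : 0 < β) :
    StrictMonoOn (fun t => β * t - α / t) (Ioi 0) := by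
  intro x hx y _ hxy
  have : α / y ≤ α / x := div_le_div_of_nonneg_left hα hx hxy.le
  have : β * x < β * y := mul_lt_mul_of_pos_left hxy hβ
  dsimp only
  linarith

lemma image_mul_sub_div_Ioi (hα : 0 < α) (hβ : 0 < β) :
    (fun t => β * t - α / t) '' Ioi 0 = univ := by
  refine eq_univ_of_forall fun y => ?_
  -- the positive root of `β t² - y t - α = 0`
  set D := √(y ^ 2 + 4 * α * β)
  have hD : D ^ 2 = y ^ 2 + 4 * α * β := sq_sqrt (by positivity)
  have hyD : 0 < y + D := by nlinarith [sqrt_nonneg (y ^ 2 + 4 * α * β)]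
  refine ⟨(y + D) / (2 * β), div_pos hyD (by positivity), ?_⟩
  field_simp
  nlinarith

theorem integral_Ioi_mul_sub_div_comp (hα : 0 < α) (hβ : 0 < β) (g : ℝ → E) :
    ∫ t in Ioi 0, (β + α / t ^ 2) • g (β * t - α / t) = ∫ x, g x := by
  rw [← setIntegral_univ (f := g), ← image_mul_sub_div_Ioi hα hβ,
    integral_image_eq_integral_abs_deriv_smul measurableSet_Ioi
      (fun t ht => (hasDerivAt_mul_sub_div (ne_of_gt ht)).hasDerivWithinAt)
      (strictMonoOn_mul_sub_div hα.le hβ).injOn]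
  refine setIntegral_congr_fun measurableSet_Ioi fun t _ => ?_
  rw [abs_of_pos (by positivity)]

theorem integrableOn_Ioi_mul_sub_div_comp_iff (hα : 0 < α) (hβ : 0 < β) (g : ℝ → E) :
    IntegrableOn (fun t => (β + α / t ^ 2) • g (β * t - α / t)) (Ioi 0) ↔ Integrable g := by
  rw [← integrableOn_univ, ← image_mul_sub_div_Ioi hα hβ,
    integrableOn_image_iff_integrableOn_abs_deriv_smul measurableSet_Ioi
      (fun t ht => (hasDerivAt_mul_sub_div (ne_of_gt ht)).hasDerivWithinAt)
      (strictMonoOn_mul_sub_div hα.le hβ).injOn]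
  refine integrableOn_congr_fun (fun t _ => ?_) measurableSet_Ioi
  rw [abs_of_pos (by positivity)]

theorem integral_Ioi_div_sq_smul_comp_div (g : ℝ → E) {c : ℝ} (hc : 0 < c) :
    ∫ t in Ioi 0, (c / t ^ 2) • g (c / t) = ∫ t in Ioi 0, g t := by
  have hinv : (fun t : ℝ => c / t) '' Ioi 0 = Ioi 0 := by
    ext y
    refine ⟨?_, fun hy => ⟨c / y, div_pos hc hy, div_div_cancel₀ hc.ne'⟩⟩
    rintro ⟨t, ht, rfl⟩
    exact div_pos hc ht
  have hderiv (t : ℝ) (ht : t ∈ Ioi 0) :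
      HasDerivWithinAt (fun t => c / t) (-(c / t ^ 2)) (Ioi 0) t := by
    simpa [div_eq_mul_inv] using ((hasDerivAt_inv (ne_of_gt ht)).const_mul c).hasDerivWithinAt
  have hinj : InjOn (fun t : ℝ => c / t) (Ioi 0) := fun x _ y _ hxy =>
    inv_injective (mul_left_cancel₀ hc.ne' (by simpa [div_eq_mul_inv] using hxy))
  conv_rhs => rw [← hinv, integral_image_eq_integral_abs_deriv_smul measurableSet_Ioi hderiv hinj]
  refine setIntegral_congr_fun measurableSet_Ioi fun t ht => ?_
  rw [abs_neg, abs_of_pos (div_pos hc (pow_pos ht 2))]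

theorem integral_Ioi_exp_neg_sq_mul_sub_div (hα : 0 < α) (hβ : 0 < β) :
    ∫ t in Ioi 0, exp (-(β * t - α / t) ^ 2) = √π / (2 * β) := by
  set h : ℝ → ℝ := fun t => exp (-(β * t - α / t) ^ 2) with h_def
  have hgauss : Integrable fun x : ℝ => exp (-x ^ 2) := by
    simpa using integrable_exp_neg_mul_sq one_pos
  have hsum_int : IntegrableOn (fun t => β * h t + α / t ^ 2 * h t) (Ioi 0) := by
    simpa only [h_def, smul_eq_mul, add_mul] using
      (integrableOn_Ioi_mul_sub_div_comp_iff hα hβ _).2 hgauss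
  have hsum : ∫ t in Ioi 0, (β + α / t ^ 2) * h t = √π := by
    simpa using (integral_Ioi_mul_sub_div_comp hα hβ fun x => exp (-x ^ 2)).trans
      (by simpa using integral_gaussian 1)
  have hsymm : ∫ t in Ioi 0, α / t ^ 2 * h t = β * ∫ t in Ioi 0, h t := by
    rw [← integral_Ioi_div_sq_smul_comp_div h (div_pos hα hβ), ← integral_const_mul]
    refine setIntegral_congr_fun measurableSet_Ioi fun t ht => ?_
    have ht : t ≠ 0 := ne_of_gt ht
    have h_symm : h (α / β / t) = h t := by
      simp only [h_def]
      congr 1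
      field_simp
      ring
    rw [smul_eq_mul, h_symm]
    field_simp
  have hmeas : Measurable fun t => β * h t := by fun_prop
  obtain ⟨hh_int, hinv_int⟩ := (integrable_add_iff_of_nonneg hmeas.aestronglyMeasurable
    (.of_forall fun t => by positivity) (.of_forall fun t => by positivity)).1 hsum_int
  have hsplit : ∫ t in Ioi 0, (β + α / t ^ 2) * h t
      = β * (∫ t in Ioi 0, h t) + ∫ t in Ioi 0, α / t ^ 2 * h t := by
    simp only [add_mul]
    rw [integral_add hh_int hinv_int, integral_const_mul]
  rw [hsplit, hsymm] at hsum
  field_simp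
  linarith

theorem integral_Ioi_exp_neg_sq_mul_add_div_sq (hα : 0 ≤ α) (hβ : 0 < β) :
    ∫ t in Ioi 0, exp (-(β ^ 2 * t ^ 2 + α ^ 2 / t ^ 2)) = √π / (2 * β) * exp (-2 * α * β) := by
  rcases hα.eq_or_lt with rfl | hα
  · simp only [zero_pow two_ne_zero, zero_div, add_zero, mul_zero, zero_mul, exp_zero, mul_one,
      ← neg_mul, integral_gaussian_Ioi]
    rw [sqrt_div pi_pos.le, sqrt_sq hβ.le]
    ring
  · have hsq (t : ℝ) (ht : t ∈ Ioi 0) : exp (-(β ^ 2 * t ^ 2 + α ^ 2 / t ^ 2))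
        = exp (-2 * α * β) * exp (-(β * t - α / t) ^ 2) := by
      have ht : t ≠ 0 := ne_of_gt ht
      rw [← exp_add]
      congr 1
      field_simp
      ring
    rw [setIntegral_congr_fun measurableSet_Ioi hsq, integral_const_mul,
      integral_Ioi_exp_neg_sq_mul_sub_div hα hβ, mul_comm]

theorem integral_Ioi_rpow_neg_half_mul_exp (hα : 0 ≤ α) (hβ : 0 < β) :
    ∫ s in Ioi 0, s ^ (-(1 / 2) : ℝ) * exp (-(β ^ 2 * s + α ^ 2 / s))
      = √π / β * exp (-2 * α * β) := by
  calc ∫ s in Ioi 0, s ^ (-(1 / 2) : ℝ) * exp (-(β ^ 2 * s + α ^ 2 / s))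
      = ∫ t in Ioi 0, 2 * exp (-(β ^ 2 * t ^ 2 + α ^ 2 / t ^ 2)) := by
        rw [← integral_comp_rpow_Ioi_of_pos two_pos]
        refine setIntegral_congr_fun measurableSet_Ioi fun t ht => ?_
        have ht : 0 < t := ht
        have hroot : (t ^ (2 : ℝ)) ^ (-(1 / 2) : ℝ) = t⁻¹ := by
          rw [← rpow_mul ht.le, ← rpow_neg_one]
          norm_num
        rw [hroot, rpow_two, smul_eq_mul]
        norm_num
        field_simp
    _ = √π / β * exp (-2 * α * β) := by
        rw [integral_const_mul, integral_Ioi_exp_neg_sq_mul_add_div_sq hα hβ]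
        field_simp

end CauchySchlomilch

lemma gaussian_density_mul_gamma_density_eq (k c b r : ℝ) {s : ℝ} (hs : 0 < s) :
    (2 * π * s) ^ (-k / 2) * exp (-r ^ 2 / (2 * s)) * (c * s ^ ((k + 1) / 2 - 1) * exp (-b * s))
      = (2 * π) ^ (-k / 2) * c * (s ^ (-(1 / 2) : ℝ) * exp (-(b * s + r ^ 2 / 2 / s))) := by
  have hpow : s ^ (-k / 2) * s ^ ((k + 1) / 2 - 1) = s ^ (-(1 / 2) : ℝ) := by
    rw [← rpow_add hs]
    congr 1
    ring
  have hexp : exp (-r ^ 2 / (2 * s)) * exp (-b * s) = exp (-(b * s + r ^ 2 / 2 / s)) := by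
    rw [← exp_add]
    congr 1
    ring
  rw [mul_rpow (by positivity) hs.le, ← hpow, ← hexp]
  ring

theorem gaussian_gamma_mixture_is_laplace_general (p : ℕ) (lam : ℝ) (hlam : 0 < lam) :
    ∃ C : ℝ, 0 < C ∧ ∀ W : EuclideanSpace ℝ (Fin p),
      (∫ s in Set.Ioi (0 : ℝ),
          (2 * Real.pi * s) ^ (-(p : ℝ) / 2) * Real.exp (-‖W‖ ^ 2 / (2 * s))
            * ((lam ^ 2 / 2) ^ (((p : ℝ) + 1) / 2) / Real.Gamma (((p : ℝ) + 1) / 2)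
                * s ^ (((p : ℝ) + 1) / 2 - 1) * Real.exp (-(lam ^ 2 / 2) * s)))
        = C * Real.exp (-lam * ‖W‖) := by
  set c := (lam ^ 2 / 2) ^ (((p : ℝ) + 1) / 2) / Real.Gamma (((p : ℝ) + 1) / 2)
  have hc : 0 < c := div_pos (by positivity) (Gamma_pos_of_pos (by positivity))
  refine ⟨(2 * π) ^ (-(p : ℝ) / 2) * c * (√π / (lam / √2)), by positivity, fun W => ?_⟩
  have hsq (x : ℝ) : x ^ 2 / 2 = (x / √2) ^ 2 := by rw [div_pow, sq_sqrt zero_le_two]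
  have hexponent : -2 * (‖W‖ / √2) * (lam / √2) = -lam * ‖W‖ := by
    field_simp
    rw [sq_sqrt zero_le_two]
    ring
  rw [setIntegral_congr_fun measurableSet_Ioi fun s hs =>
      gaussian_density_mul_gamma_density_eq _ _ _ _ hs, integral_const_mul, hsq, hsq ‖W‖,
    integral_Ioi_rpow_neg_half_mul_exp (by positivity) (by positivity), hexponent]
  ring

/-- Gaussian scale-mixture / group lasso equivalence: if `γ² ∼ Gamma((p+1)/2, λ²/2)`
(shape–rate) and `W | γ² ∼ N(0, γ² I_p)` on `ℝ^p`, then the marginal density of `W` is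
proportional to `exp(−λ‖W‖₂)`, i.e. it equals `C · exp(−λ‖W‖₂)` for some `C > 0`. -/
theorem gaussian_gamma_mixture_is_laplace (p : ℕ) (hp : 1 ≤ p) (lam : ℝ) (hlam : 0 < lam) :
    ∃ C : ℝ, 0 < C ∧ ∀ W : EuclideanSpace ℝ (Fin p),
      (∫ s in Set.Ioi (0 : ℝ),
          (2 * Real.pi * s) ^ (-(p : ℝ) / 2) * Real.exp (-‖W‖ ^ 2 / (2 * s))
            * ((lam ^ 2 / 2) ^ (((p : ℝ) + 1) / 2) / Real.Gamma (((p : ℝ) + 1) / 2)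
                * s ^ (((p : ℝ) + 1) / 2 - 1) * Real.exp (-(lam ^ 2 / 2) * s)))
        = C * Real.exp (-lam * ‖W‖) :=
  gaussian_gamma_mixture_is_laplace_general p lam hlam
end

section
/- For p ≥ 1 and λ > 0, the integral ∫₀^∞ (2πs)^{−p/2} exp(−r²/(2s)) · ((λ²/2)^{(p+1)/2}/Γ((p+1)/2)) · s^{(p+1)/2 − 1} e^{−λ² s/2} ds, as a function of r ≥ 0, equals c · exp(−λ r) for a constant c > 0 independent of r. -/
/-!
Substituting `s = t²` turns `∫ s^(-1/2) e^(-a/s - b s) ds` into `2 ∫ e^(-a/t² - b t²) dt`, and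
`a/t² + b t² = (√b t - √a/t)² + 2√(ab)`. The Cauchy–Schlömilch substitution `u = β t - α/t` maps
`(0, ∞)` increasingly onto `ℝ`; its inverse `t = (u + √(u² + 4αβ)) / (2β)` has derivative
`(1 + u/√(u² + 4αβ)) / (2β)`, whose odd part integrates to zero against `e^(-u²)`. Hence
`∫₀^∞ e^(-(β t - α/t)²) dt = √π / (2β)` whatever `α`, and with `a = r²/2`, `b = λ²/2` the mixture
is a constant multiple of `e^(-2√(ab)) = e^(-λ r)`.
-/

open MeasureTheory Real Set

lemma abs_lt_sqrt_sq_add {c : ℝ} (hc : 0 < c) (u : ℝ) : |u| < √(u ^ 2 + c) := by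
  rw [← sqrt_sq_eq_abs]
  exact sqrt_lt_sqrt (sq_nonneg u) (lt_add_of_pos_right _ hc)

lemma add_sqrt_sq_add_pos {c : ℝ} (hc : 0 < c) (u : ℝ) : 0 < u + √(u ^ 2 + c) := by
  linarith [abs_lt_sqrt_sq_add hc u, neg_abs_le u]

lemma one_add_div_sqrt_sq_add_pos {c : ℝ} (hc : 0 < c) (u : ℝ) :
    0 < 1 + u / √(u ^ 2 + c) := by
  rw [← neg_lt_iff_pos_add', lt_div_iff₀ (sqrt_pos.2 (by positivity))]
  linarith [add_sqrt_sq_add_pos hc u]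

lemma integrable_div_sqrt_sq_add_mul_exp_neg_sq {c : ℝ} (hc : 0 ≤ c) :
    Integrable fun u : ℝ => u / √(u ^ 2 + c) * exp (-u ^ 2) := by
  refine Integrable.bdd_mul (c := 1) (by simpa using integrable_exp_neg_mul_sq one_pos)
    (Measurable.aestronglyMeasurable (by fun_prop)) (ae_of_all _ fun u => ?_)
  rw [Real.norm_eq_abs, abs_div, abs_of_nonneg (sqrt_nonneg _), ← sqrt_sq_eq_abs]
  exact div_le_one_of_le₀ (sqrt_le_sqrt (by linarith)) (sqrt_nonneg _)

lemma integral_div_sqrt_sq_add_mul_exp_neg_sq (c : ℝ) :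
    ∫ u : ℝ, u / √(u ^ 2 + c) * exp (-u ^ 2) = 0 := by
  have h := integral_neg_eq_self (fun u : ℝ => u / √(u ^ 2 + c) * exp (-u ^ 2)) volume
  simp only [neg_sq, neg_div, neg_mul, integral_neg] at h
  linarith

lemma integral_one_add_div_sqrt_sq_add_mul_exp_neg_sq {c : ℝ} (hc : 0 ≤ c) :
    ∫ u : ℝ, (1 + u / √(u ^ 2 + c)) * exp (-u ^ 2) = √π := by
  simp only [add_mul, one_mul]
  rw [integral_add (by simpa using integrable_exp_neg_mul_sq one_pos)
    (integrable_div_sqrt_sq_add_mul_exp_neg_sq hc), integral_div_sqrt_sq_add_mul_exp_neg_sq,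
    add_zero]
  simpa using integral_gaussian 1

noncomputable def cauchySchlomilchInv (α β u : ℝ) : ℝ :=
  (u + √(u ^ 2 + 4 * α * β)) / (2 * β)

section CauchySchlomilch

variable {α β : ℝ}

lemma cauchySchlomilchInv_pos (hα : 0 < α) (hβ : 0 < β) (u : ℝ) :
    0 < cauchySchlomilchInv α β u := by
  unfold cauchySchlomilchInv
  exact div_pos (add_sqrt_sq_add_pos (by positivity) u) (by positivity)

lemma mul_cauchySchlomilchInv_sub_div (hα : 0 < α) (hβ : 0 < β) (u : ℝ) :
    β * cauchySchlomilchInv α β u - α / cauchySchlomilchInv α β u = u := by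
  have hsq := sq_sqrt (by positivity : 0 ≤ u ^ 2 + 4 * α * β)
  have hpos : 0 < u + √(u ^ 2 + 4 * α * β) := add_sqrt_sq_add_pos (by positivity) u
  unfold cauchySchlomilchInv
  set s := √(u ^ 2 + 4 * α * β)
  field_simp
  linear_combination hsq

lemma cauchySchlomilchInv_mul_sub_div (hα : 0 ≤ α) (hβ : 0 < β) {t : ℝ} (ht : 0 < t) :
    cauchySchlomilchInv α β (β * t - α / t) = t := by
  have hsq : (β * t - α / t) ^ 2 + 4 * α * β = (β * t + α / t) ^ 2 := by
    field_simp; ring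
  rw [cauchySchlomilchInv, hsq, sqrt_sq (by positivity)]
  field_simp
  ring

lemma range_cauchySchlomilchInv (hα : 0 < α) (hβ : 0 < β) :
    range (cauchySchlomilchInv α β) = Ioi 0 :=
  (range_subset_iff.2 (cauchySchlomilchInv_pos hα hβ)).antisymm fun _ ht =>
    ⟨_, cauchySchlomilchInv_mul_sub_div hα.le hβ ht⟩

lemma hasDerivAt_cauchySchlomilchInv (hα : 0 < α) (hβ : 0 < β) (u : ℝ) :
    HasDerivAt (cauchySchlomilchInv α β) ((1 + u / √(u ^ 2 + 4 * α * β)) / (2 * β)) u := by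
  have hc : u ^ 2 + 4 * α * β ≠ 0 := by positivity
  have hsqrt := ((hasDerivAt_pow 2 u).add_const (4 * α * β)).sqrt hc
  refine (((hasDerivAt_id' u).add hsqrt).div_const (2 * β)).congr_deriv ?_
  field_simp
  norm_num
  ring

lemma cauchySchlomilchInv_strictMono (hα : 0 < α) (hβ : 0 < β) :
    StrictMono (cauchySchlomilchInv α β) :=
  strictMono_of_deriv_pos fun u => by
    rw [(hasDerivAt_cauchySchlomilchInv hα hβ u).deriv]
    exact div_pos (one_add_div_sqrt_sq_add_pos (by positivity) u) (by positivity)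

theorem integral_exp_neg_mul_sub_div_sq (hα : 0 ≤ α) (hβ : 0 < β) :
    ∫ t in Ioi 0, exp (-(β * t - α / t) ^ 2) = √π / (2 * β) := by
  rcases hα.eq_or_lt with rfl | hα
  · simp only [zero_div, sub_zero, mul_pow, ← neg_mul, integral_gaussian_Ioi,
      sqrt_div' _ (sq_nonneg β), sqrt_sq hβ.le]
    ring
  have hderiv := hasDerivAt_cauchySchlomilchInv hα hβ
  have hchange := integral_image_eq_integral_abs_deriv_smul MeasurableSet.univ
    (fun u _ => (hderiv u).hasDerivWithinAt)
    (cauchySchlomilchInv_strictMono hα hβ).injective.injOn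
    (fun t => exp (-(β * t - α / t) ^ 2))
  rw [image_univ, range_cauchySchlomilchInv hα hβ, setIntegral_univ] at hchange
  simp only [mul_cauchySchlomilchInv_sub_div hα hβ, smul_eq_mul] at hchange
  have hc : 0 < 4 * α * β := by positivity
  calc _ = ∫ u, (1 + u / √(u ^ 2 + 4 * α * β)) * exp (-u ^ 2) / (2 * β) := by
        rw [hchange]
        congr 1 with u
        rw [abs_of_pos (div_pos (one_add_div_sqrt_sq_add_pos hc u) (by positivity))]
        ring
    _ = √π / (2 * β) := by
        rw [integral_div, integral_one_add_div_sqrt_sq_add_mul_exp_neg_sq hc.le]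

end CauchySchlomilch

theorem integral_rpow_neg_half_mul_exp_neg_div_sub_mul {a b : ℝ} (ha : 0 ≤ a) (hb : 0 < b) :
    ∫ s in Ioi 0, s ^ (-(1 / 2 : ℝ)) * exp (-(a / s) - b * s)
      = √(π / b) * exp (-(2 * √(a * b))) := by
  have hb' : 0 < √b := sqrt_pos.2 hb
  have hsubst : ∀ t ∈ Ioi (0 : ℝ),
      ((2 : ℝ) * t ^ ((2 : ℝ) - 1)) • ((t ^ (2 : ℝ)) ^ (-(1 / 2 : ℝ))
          * exp (-(a / t ^ (2 : ℝ)) - b * t ^ (2 : ℝ)))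
        = 2 * exp (-(√b * t - √a / t) ^ 2) * exp (-(2 * √(a * b))) := by
    intro t (ht : 0 < t)
    have hsq : (t ^ (2 : ℝ)) ^ (-(1 / 2 : ℝ)) = t⁻¹ := by
      rw [← rpow_mul ht.le]; norm_num [rpow_neg_one]
    have hexp : -(a / t ^ 2) - b * t ^ 2 = -(√b * t - √a / t) ^ 2 + -(2 * √(a * b)) := by
      rw [sqrt_mul ha]
      field_simp
      linear_combination sq_sqrt ha + t ^ 4 * sq_sqrt hb.le
    rw [hsq, rpow_two, hexp, exp_add, smul_eq_mul]
    norm_num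
    field_simp
  rw [← integral_comp_rpow_Ioi_of_pos two_pos, setIntegral_congr_fun measurableSet_Ioi hsubst,
    integral_mul_const, integral_const_mul, integral_exp_neg_mul_sub_div_sq (sqrt_nonneg a) hb',
    sqrt_div' _ hb.le]
  field_simp

lemma gaussian_mul_gamma_density_eq (p C r l : ℝ) {s : ℝ} (hs : 0 < s) :
    (2 * π * s) ^ (-p / 2) * exp (-r ^ 2 / (2 * s)) * C * s ^ ((p + 1) / 2 - 1)
        * exp (-l ^ 2 * s / 2)
      = (2 * π) ^ (-p / 2) * C
        * (s ^ (-(1 / 2 : ℝ)) * exp (-(r ^ 2 / 2 / s) - l ^ 2 / 2 * s)) := by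
  have hpow : s ^ (-p / 2) * s ^ ((p + 1) / 2 - 1) = s ^ (-(1 / 2 : ℝ)) := by
    rw [← rpow_add hs]; ring_nf
  have hexp : exp (-(r ^ 2 / 2 / s) - l ^ 2 / 2 * s)
      = exp (-r ^ 2 / (2 * s)) * exp (-l ^ 2 * s / 2) := by
    rw [← exp_add]; ring_nf
  rw [mul_rpow (by positivity) hs.le, ← hpow, hexp]
  ring

theorem gaussian_gamma_scalar_mixture_general (p : ℕ) (lam : ℝ) (hlam : 0 < lam) :
    ∃ c : ℝ, 0 < c ∧ ∀ r : ℝ, 0 ≤ r →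
      (∫ s in Set.Ioi (0 : ℝ),
          (2 * Real.pi * s) ^ (-(p : ℝ) / 2) * Real.exp (-r ^ 2 / (2 * s))
            * ((lam ^ 2 / 2) ^ (((p : ℝ) + 1) / 2) / Real.Gamma (((p : ℝ) + 1) / 2))
            * s ^ (((p : ℝ) + 1) / 2 - 1) * Real.exp (-lam ^ 2 * s / 2))
        = c * Real.exp (-lam * r) := by
  set C := (lam ^ 2 / 2) ^ (((p : ℝ) + 1) / 2) / Real.Gamma (((p : ℝ) + 1) / 2)
  have hC : 0 < C := div_pos (by positivity) (Gamma_pos_of_pos (by positivity))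
  refine ⟨(2 * π) ^ (-(p : ℝ) / 2) * C * √(π / (lam ^ 2 / 2)), by positivity, fun r hr => ?_⟩
  have hroot : √(r ^ 2 / 2 * (lam ^ 2 / 2)) = lam * r / 2 := by
    rw [show r ^ 2 / 2 * (lam ^ 2 / 2) = (lam * r / 2) ^ 2 by ring]
    exact sqrt_sq (by positivity)
  rw [setIntegral_congr_fun measurableSet_Ioi
      fun s hs => gaussian_mul_gamma_density_eq _ C r lam hs,
    integral_const_mul, integral_rpow_neg_half_mul_exp_neg_div_sub_mul (by positivity)
      (by positivity), hroot]
  ring_nf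

/-- Scalar form of the Gaussian–Gamma scale-mixture identity: as a function of `r ≥ 0`,
the integral over the variance `s` of the `ℝ^p` Gaussian normalizing kernel times the
`Gamma((p+1)/2, λ²/2)` density equals `c · exp(−λ r)` for a constant `c > 0`. -/
theorem gaussian_gamma_scalar_mixture (p : ℕ) (hp : 1 ≤ p) (lam : ℝ) (hlam : 0 < lam) :
    ∃ c : ℝ, 0 < c ∧ ∀ r : ℝ, 0 ≤ r →
      (∫ s in Set.Ioi (0 : ℝ),
          (2 * Real.pi * s) ^ (-(p : ℝ) / 2) * Real.exp (-r ^ 2 / (2 * s))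
            * ((lam ^ 2 / 2) ^ (((p : ℝ) + 1) / 2) / Real.Gamma (((p : ℝ) + 1) / 2))
            * s ^ (((p : ℝ) + 1) / 2 - 1) * Real.exp (-lam ^ 2 * s / 2))
        = c * Real.exp (-lam * r) :=
  gaussian_gamma_scalar_mixture_general p lam hlam
end
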